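/- arXiv:2510.11910 — 2 statements merged into one kernel-verified Lean document; each statement's English description precedes it below -/
import Mathlib

section
/- Let Σ₀ = U diag(a₁,…,a_d) Uᵀ and Σ₁ = U diag(b₁,…,b_d) Uᵀ with U ∈ ℝ^{d×d} orthogonal and a_i, b_i > 0, and let λ ≥ 0 be such that λ ≠ 2√(a_i) for every i with b_i > a_i. Consider the feasible set K(Σ₀,Σ₁) of matrices K ∈ ℝ^{d×d} for which the block matrix [[Σ₀, K],[Kᵀ, Σ₁]] is positive semidefinite, and the objective F(K) := tr(Σ₀) + tr(Σ₁) − 2 tr(K) + λ‖(Kᵀ Σ₀^{−1} − I) Σ₀^{1/2}‖_{S1}. Then F is minimized over K(Σ₀,Σ₁) at K* = U diag(√(a₁b₁)·m₁^⋆, …, √(a_d b_d)·m_d^⋆) Uᵀ, where m_i^⋆ = 1 if b_i ≤ a_i or (b_i > a_i and λ < 2√(a_i)), and m_i^⋆ = √(a_i/b_i) if b_i > a_i and λ > 2√(a_i); the associated barycentric matrix A_λ := (K*)ᵀ Σ₀^{−1} equals U diag(α₁^⋆,…,α_d^⋆) Uᵀ with α_i^⋆ = √(b_i/a_i) if b_i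 ≤ a_i or (b_i > a_i and λ < 2√(a_i)), and α_i^⋆ = 1 if b_i > a_i and λ > 2√(a_i). -/
/-!
Conjugating by `U` reduces everything to `Σ₀ = diag a`, `Σ₁ = diag b`: feasibility is preserved by
congruence, and traces, inverses, square roots and the nuclear norm commute with orthogonal
conjugation. For diagonal covariances, the `2 × 2` principal minors of the block matrix give
`K i i ^ 2 ≤ a i * b i`, and the nuclear norm dominates the sum of the absolute diagonal entries,
so the objective is at least `∑ a + ∑ b + ∑ i, c_i (K i i)` with the scalar cost
`c_i k = -2 k + λ |k / √a_i - √a_i|`, with equality for diagonal `K`. Writing `k = √a_i u`,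
`c_i = -2 √a_i u + λ |u - √a_i|`: if `√b_i ≤ √a_i` or `λ ≤ 2 √a_i`, lowering `u` below `√b_i`
costs at least as much in the trace term as it saves in the penalty, so `u = √b_i` is optimal;
if `λ ≥ 2 √a_i`, then `c_i ≥ -2 √a_i u + 2 √a_i |u - √a_i| ≥ -2 a_i`, attained at `u = √a_i`.
-/

open Matrix BigOperators

section PosSemidefSqrt

open scoped ComplexOrder

noncomputable def Matrix.PosSemidef.sqrt {n : Type*} [Fintype n] [DecidableEq n]
    {𝕜 : Type*} [RCLike 𝕜] {A : Matrix n n 𝕜} (hA : A.PosSemidef) : Matrix n n 𝕜 :=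
  hA.1.eigenvectorUnitary.1 * diagonal ((↑) ∘ (√·) ∘ hA.1.eigenvalues) *
    (star hA.1.eigenvectorUnitary : Matrix n n 𝕜)

end PosSemidefSqrt

noncomputable def nuclearNorm {m n : Type*} [Fintype m] [Fintype n] [DecidableEq n]
    (M : Matrix m n ℝ) : ℝ :=
  (Matrix.PosSemidef.sqrt (Matrix.posSemidef_conjTranspose_mul_self M)).trace

def crossCovFeasible {d : ℕ} (Sigma0 Sigma1 : Matrix (Fin d) (Fin d) ℝ) :
    Set (Matrix (Fin d) (Fin d) ℝ) :=
  {K | (Matrix.fromBlocks Sigma0 K Kᵀ Sigma1).PosSemidef}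

open scoped MatrixOrder

section NuclearNorm

variable {m n k : Type*} [Fintype m] [Fintype n] [DecidableEq n] [Fintype k]

lemma Matrix.PosSemidef.sqrt_eq_cfcSqrt {A : Matrix n n ℝ} (hA : A.PosSemidef) :
    hA.sqrt = CFC.sqrt A := by
  rw [CFC.sqrt_eq_cfc, cfc_nnreal_eq_real _ A hA.nonneg, hA.1.cfc_eq, IsHermitian.cfc,
    Unitary.conjStarAlgAut_apply, Matrix.PosSemidef.sqrt]
  congr 3
  funext i
  simp [max_eq_left (hA.eigenvalues_nonneg i)]

lemma cfcSqrt_conjTranspose_mul_mul_same [DecidableEq m] {V : Matrix n m ℝ} (hV : V * Vᴴ = 1)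
    {A : Matrix n n ℝ} (hA : A.PosSemidef) :
    CFC.sqrt (Vᴴ * A * V) = Vᴴ * CFC.sqrt A * V := by
  refine CFC.sqrt_unique ?_ ((CFC.sqrt_nonneg A).posSemidef.conjTranspose_mul_mul_same V).nonneg
  calc Vᴴ * CFC.sqrt A * V * (Vᴴ * CFC.sqrt A * V)
      = Vᴴ * (CFC.sqrt A * (V * Vᴴ) * CFC.sqrt A) * V := by simp only [Matrix.mul_assoc]
    _ = Vᴴ * A * V := by rw [hV, Matrix.mul_one, CFC.sqrt_mul_sqrt_self A hA.nonneg]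

lemma cfcSqrt_diagonal {e : n → ℝ} (he : 0 ≤ e) :
    CFC.sqrt (diagonal e) = diagonal fun i => √(e i) := by
  refine CFC.sqrt_unique ?_ (PosSemidef.diagonal fun i => Real.sqrt_nonneg _).nonneg
  rw [diagonal_mul_diagonal]
  congr 1
  funext i
  exact Real.mul_self_sqrt (he i)

lemma nuclearNorm_eq_trace_cfcSqrt (M : Matrix m n ℝ) :
    nuclearNorm M = (CFC.sqrt (Mᴴ * M)).trace := by
  rw [nuclearNorm, PosSemidef.sqrt_eq_cfcSqrt]

lemma nuclearNorm_mul_left [DecidableEq m] {V : Matrix k m ℝ} (hV : Vᴴ * V = 1)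
    (M : Matrix m n ℝ) : nuclearNorm (V * M) = nuclearNorm M := by
  rw [nuclearNorm_eq_trace_cfcSqrt, nuclearNorm_eq_trace_cfcSqrt, conjTranspose_mul,
    Matrix.mul_assoc, ← Matrix.mul_assoc Vᴴ, hV, Matrix.one_mul]

lemma nuclearNorm_mul_right [DecidableEq k] {V : Matrix n k ℝ} (hV : V * Vᴴ = 1)
    (M : Matrix m n ℝ) : nuclearNorm (M * V) = nuclearNorm M := by
  have hGram : (M * V)ᴴ * (M * V) = Vᴴ * (Mᴴ * M) * V := by
    simp only [conjTranspose_mul, Matrix.mul_assoc]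
  rw [nuclearNorm_eq_trace_cfcSqrt, nuclearNorm_eq_trace_cfcSqrt, hGram,
    cfcSqrt_conjTranspose_mul_mul_same hV (posSemidef_conjTranspose_mul_self M),
    trace_mul_cycle, hV, Matrix.one_mul]

lemma nuclearNorm_eq_sum_sqrt {M : Matrix m n ℝ} {e : n → ℝ} (he : 0 ≤ e)
    (hM : Mᴴ * M = diagonal e) : nuclearNorm M = ∑ i, √(e i) := by
  rw [nuclearNorm_eq_trace_cfcSqrt, hM, cfcSqrt_diagonal he, trace_diagonal]

lemma nuclearNorm_diagonal (c : n → ℝ) : nuclearNorm (diagonal c) = ∑ i, |c i| := by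
  refine nuclearNorm_eq_sum_sqrt (e := fun i => c i ^ 2) (fun i => sq_nonneg _) ?_ |>.trans ?_
  · simp [diagonal_mul_diagonal, sq]
  · simp_rw [Real.sqrt_sq_eq_abs]

omit [DecidableEq n] in
lemma sq_le_conjTranspose_mul_self_apply (B : Matrix n n ℝ) (i : n) :
    B i i ^ 2 ≤ (Bᴴ * B) i i := by
  rw [mul_apply, sq]
  exact Finset.single_le_sum (f := fun j => Bᴴ i j * B j i) (fun j _ => by simp [mul_self_nonneg])
    (Finset.mem_univ i) |>.trans_eq' (by simp)

lemma trace_le_nuclearNorm (M : Matrix n n ℝ) : M.trace ≤ nuclearNorm M := by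
  have hG := posSemidef_conjTranspose_mul_self M
  set V : Matrix n n ℝ := ↑hG.1.eigenvectorUnitary
  have hVl : Vᴴ * V = 1 := Unitary.star_mul_self_of_mem hG.1.eigenvectorUnitary.2
  have hVr : V * Vᴴ = 1 := Unitary.mul_star_self_of_mem hG.1.eigenvectorUnitary.2
  set B := Vᴴ * M * V
  have hB : Bᴴ * B = diagonal hG.1.eigenvalues := by
    have h := hG.1.conjStarAlgAut_star_eigenvectorUnitary
    simp only [Unitary.conjStarAlgAut_star_apply, RCLike.ofReal_real_eq_id,
      Function.id_comp] at h
    calc Bᴴ * B = Vᴴ * Mᴴ * (V * Vᴴ) * M * V := by simp only [B, conjTranspose_mul,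
          conjTranspose_conjTranspose, Matrix.mul_assoc]
      _ = diagonal hG.1.eigenvalues := by rw [hVr, Matrix.mul_one, Matrix.mul_assoc Vᴴ, ← h]; rfl
  have hnorm : nuclearNorm M = nuclearNorm B := by
    rw [nuclearNorm_mul_right hVr, nuclearNorm_mul_left (by rwa [conjTranspose_conjTranspose])]
  have htrace : M.trace = B.trace := by
    rw [trace_mul_cycle, hVr, Matrix.one_mul]
  rw [hnorm, htrace, nuclearNorm_eq_sum_sqrt hG.eigenvalues_nonneg hB, trace]
  refine Finset.sum_le_sum fun i _ => Real.le_sqrt_of_sq_le ?_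
  simpa only [hB, diagonal_apply_eq, diag_apply] using sq_le_conjTranspose_mul_self_apply B i


lemma sum_abs_diag_le_nuclearNorm (M : Matrix n n ℝ) : ∑ i, |M i i| ≤ nuclearNorm M := by
  set s : n → ℝ := fun i => if 0 ≤ M i i then 1 else -1
  have hS : diagonal s * (diagonal s)ᴴ = 1 := by
    rw [diagonal_conjTranspose, diagonal_mul_diagonal, ← diagonal_one]
    congr 1
    funext i
    by_cases h : 0 ≤ M i i <;> simp [s, h]
  have hdiag : ∀ i, (M * diagonal s) i i = |M i i| := by
    intro i
    by_cases h : 0 ≤ M i i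
    · simp [s, h, abs_of_nonneg h]
    · simp [s, h, abs_of_neg (not_le.mp h)]
  calc ∑ i, |M i i| = (M * diagonal s).trace := by simp only [trace, diag_apply, hdiag]
    _ ≤ nuclearNorm (M * diagonal s) := trace_le_nuclearNorm _
    _ = nuclearNorm M := nuclearNorm_mul_right hS M

end NuclearNorm

lemma Matrix.transpose_mul_mul_transpose {n α : Type*} [Fintype n] [CommSemiring α]
    (A B : Matrix n n α) : (A * B * Aᵀ)ᵀ = A * Bᵀ * Aᵀ := by
  rw [transpose_mul, transpose_mul, transpose_transpose, Matrix.mul_assoc]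

section OrthogonalConj

variable {n : Type*} [Fintype n] [DecidableEq n] {U : Matrix n n ℝ}

lemma transpose_conj_conj_of_mem_orthogonalGroup (hU : U ∈ orthogonalGroup n ℝ)
    (A : Matrix n n ℝ) : Uᵀ * (U * A * Uᵀ) * U = A := by
  simp only [← Matrix.mul_assoc, (mem_orthogonalGroup_iff' n ℝ).mp hU, Matrix.one_mul]
  rw [Matrix.mul_assoc, (mem_orthogonalGroup_iff' n ℝ).mp hU, Matrix.mul_one]

lemma conj_transpose_conj_of_mem_orthogonalGroup (hU : U ∈ orthogonalGroup n ℝ)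
    (A : Matrix n n ℝ) : U * (Uᵀ * A * U) * Uᵀ = A := by
  simp only [← Matrix.mul_assoc, (mem_orthogonalGroup_iff n ℝ).mp hU, Matrix.one_mul]
  rw [Matrix.mul_assoc, (mem_orthogonalGroup_iff n ℝ).mp hU, Matrix.mul_one]

lemma conj_mul_conj_of_mem_orthogonalGroup (hU : U ∈ orthogonalGroup n ℝ)
    (A B : Matrix n n ℝ) : U * A * Uᵀ * (U * B * Uᵀ) = U * (A * B) * Uᵀ := by
  calc U * A * Uᵀ * (U * B * Uᵀ) = U * A * (Uᵀ * U) * B * Uᵀ := by simp only [Matrix.mul_assoc]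
    _ = U * (A * B) * Uᵀ := by
      rw [(mem_orthogonalGroup_iff' n ℝ).mp hU, Matrix.mul_one, Matrix.mul_assoc U]

lemma conj_inv_of_mem_orthogonalGroup (hU : U ∈ orthogonalGroup n ℝ) (A : Matrix n n ℝ) :
    (U * A * Uᵀ)⁻¹ = U * A⁻¹ * Uᵀ := by
  have hUinv : U⁻¹ = Uᵀ := inv_eq_right_inv ((mem_orthogonalGroup_iff n ℝ).mp hU)
  have hUTinv : Uᵀ⁻¹ = U := inv_eq_left_inv ((mem_orthogonalGroup_iff n ℝ).mp hU)
  rw [Matrix.mul_inv_rev, Matrix.mul_inv_rev, hUinv, hUTinv, Matrix.mul_assoc]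

lemma trace_conj_of_mem_orthogonalGroup (hU : U ∈ orthogonalGroup n ℝ) (A : Matrix n n ℝ) :
    (U * A * Uᵀ).trace = A.trace := by
  rw [trace_mul_cycle, (mem_orthogonalGroup_iff' n ℝ).mp hU, Matrix.one_mul]

lemma cfcSqrt_conj_of_mem_orthogonalGroup (hU : U ∈ orthogonalGroup n ℝ) {A : Matrix n n ℝ}
    (hA : A.PosSemidef) : CFC.sqrt (U * A * Uᵀ) = U * CFC.sqrt A * Uᵀ := by
  have hUT : Uᵀᴴ = U := by simp
  have hUTU : Uᵀ * Uᵀᴴ = 1 := by simpa using (mem_orthogonalGroup_iff' n ℝ).mp hU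
  simpa only [hUT, conjTranspose_eq_transpose_of_trivial] using
    cfcSqrt_conjTranspose_mul_mul_same hUTU hA

lemma nuclearNorm_conj_of_mem_orthogonalGroup (hU : U ∈ orthogonalGroup n ℝ)
    (M : Matrix n n ℝ) : nuclearNorm (U * M * Uᵀ) = nuclearNorm M := by
  rw [nuclearNorm_mul_right (by simpa using (mem_orthogonalGroup_iff' n ℝ).mp hU),
    nuclearNorm_mul_left (by simpa using (mem_orthogonalGroup_iff' n ℝ).mp hU)]

end OrthogonalConj

lemma Matrix.inv_diagonal_of_ne_zero {n α : Type*} [Fintype n] [DecidableEq n] [Field α]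
    {v : n → α} (hv : ∀ i, v i ≠ 0) : (diagonal v)⁻¹ = diagonal v⁻¹ :=
  inv_eq_right_inv <| by
    rw [diagonal_mul_diagonal, ← diagonal_one]
    exact congrArg diagonal (funext fun i => mul_inv_cancel₀ (hv i))

section CrossCovFeasible

variable {d : ℕ} {S0 S1 K : Matrix (Fin d) (Fin d) ℝ}

lemma mem_crossCovFeasible :
    K ∈ crossCovFeasible S0 S1 ↔ (fromBlocks S0 K Kᵀ S1).PosSemidef := Iff.rfl

lemma conj_mem_crossCovFeasible (hK : K ∈ crossCovFeasible S0 S1)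
    (V : Matrix (Fin d) (Fin d) ℝ) :
    V * K * Vᵀ ∈ crossCovFeasible (V * S0 * Vᵀ) (V * S1 * Vᵀ) := by
  have hconj : fromBlocks (V * S0 * Vᵀ) (V * K * Vᵀ) (V * K * Vᵀ)ᵀ (V * S1 * Vᵀ)
      = fromBlocks V 0 0 V * fromBlocks S0 K Kᵀ S1 * (fromBlocks V 0 0 V)ᴴ := by
    simp [fromBlocks_multiply, fromBlocks_transpose, transpose_mul, Matrix.mul_assoc]
  rw [mem_crossCovFeasible, hconj]
  exact hK.mul_mul_conjTranspose_same _

lemma sq_apply_le_of_mem_crossCovFeasible (hK : K ∈ crossCovFeasible S0 S1) (i j : Fin d) :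
    K i j ^ 2 ≤ S0 i i * S1 j j := by
  have hminor := (PosSemidef.submatrix hK ![Sum.inl i, Sum.inr j]).det_nonneg
  rw [det_fin_two] at hminor
  simp only [submatrix_apply, Matrix.cons_val_zero, Matrix.cons_val_one, fromBlocks_apply₁₁,
    fromBlocks_apply₁₂, fromBlocks_apply₂₁, fromBlocks_apply₂₂, transpose_apply] at hminor
  nlinarith [hminor]

lemma diagonal_mem_crossCovFeasible_diagonal {a b κ : Fin d → ℝ} (ha : ∀ i, 0 < a i)
    (hκ : ∀ i, κ i ^ 2 ≤ a i * b i) :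
    diagonal κ ∈ crossCovFeasible (diagonal a) (diagonal b) := by
  have hA : (diagonal a).PosDef := posDef_diagonal_iff.mpr ha
  have := hA.isUnit.invertible
  have hSchur := hA.fromBlocks₁₁ (diagonal κ) (diagonal b)
  rw [conjTranspose_eq_transpose_of_trivial] at hSchur
  rw [mem_crossCovFeasible, hSchur, inv_diagonal_of_ne_zero fun i => (ha i).ne',
    diagonal_transpose, diagonal_mul_diagonal, diagonal_mul_diagonal, diagonal_sub,
    posSemidef_diagonal_iff]
  intro i
  calc 0 ≤ b i - κ i ^ 2 / a i := by
        rw [sub_nonneg, div_le_iff₀ (ha i), mul_comm]; exact hκ i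
    _ = b i - κ i * (a i)⁻¹ * κ i := by ring

end CrossCovFeasible

section DirectionCost

noncomputable def directionCost (lam a k : ℝ) : ℝ := -2 * k + lam * |k / √a - √a|

noncomputable def optimalCrossCov (lam a b : ℝ) : ℝ :=
  if b ≤ a ∨ lam < 2 * √a then √a * √b else a

variable {lam a b k : ℝ}

lemma directionCost_sqrt_mul_sqrt_le (ha : 0 < a) (hlam : 0 ≤ lam)
    (hkeep : b ≤ a ∨ lam ≤ 2 * √a) (hk : k ≤ √a * √b) :
    directionCost lam a (√a * √b) ≤ directionCost lam a k := by
  have hs : 0 < √a := Real.sqrt_pos.mpr ha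
  obtain ⟨u, rfl⟩ : ∃ u, k = √a * u := ⟨k / √a, by field_simp⟩
  have hu : u ≤ √b := le_of_mul_le_mul_left hk hs
  simp only [directionCost, mul_div_cancel_left₀ _ hs.ne']
  rcases hkeep with hba | hlam2
  · have hts : √b ≤ √a := Real.sqrt_le_sqrt hba
    have hus : √a - u ≤ |u - √a| := by rw [abs_sub_comm]; exact le_abs_self _
    rw [abs_of_nonpos (sub_nonpos.mpr hts)]
    nlinarith [mul_le_mul_of_nonneg_left hus hlam]
  · have htri : |√b - √a| ≤ |u - √a| + (√b - u) := by
      calc |√b - √a| ≤ |√b - u| + |u - √a| := abs_sub_le _ _ _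
        _ = |u - √a| + (√b - u) := by rw [abs_of_nonneg (sub_nonneg.mpr hu)]; ring
    nlinarith [mul_le_mul_of_nonneg_left htri hlam]

lemma directionCost_self_le (ha : 0 < a) (hlam : 2 * √a ≤ lam) (k : ℝ) :
    directionCost lam a a ≤ directionCost lam a k := by
  have hs : 0 < √a := Real.sqrt_pos.mpr ha
  have hk : √a * (k / √a) = k := mul_div_cancel₀ k hs.ne'
  have hdev : k / √a - √a ≤ |k / √a - √a| := le_abs_self _
  simp only [directionCost, Real.div_sqrt, sub_self, abs_zero, mul_zero, add_zero]
  nlinarith [Real.mul_self_sqrt ha.le, mul_le_mul_of_nonneg_right hlam (abs_nonneg (k / √a - √a))]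

lemma directionCost_optimalCrossCov_le (ha : 0 < a) (hlam : 0 ≤ lam) (hk : k ^ 2 ≤ a * b) :
    directionCost lam a (optimalCrossCov lam a b) ≤ directionCost lam a k := by
  unfold optimalCrossCov
  split_ifs with hkeep
  · refine directionCost_sqrt_mul_sqrt_le ha hlam (hkeep.imp_right le_of_lt) ?_
    rw [← Real.sqrt_mul ha.le]
    exact (le_abs_self k).trans (Real.abs_le_sqrt hk)
  · exact directionCost_self_le ha (not_lt.mp (not_or.mp hkeep).2) k

lemma optimalCrossCov_sq_le (ha : 0 ≤ a) (hb : 0 ≤ b) : optimalCrossCov lam a b ^ 2 ≤ a * b := by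
  unfold optimalCrossCov
  split_ifs with hkeep
  · rw [mul_pow, Real.sq_sqrt ha, Real.sq_sqrt hb]
  · nlinarith [not_le.mp (not_or.mp hkeep).1]

lemma optimalCrossCov_eq_sqrt_mul_mul (ha : 0 < a) :
    optimalCrossCov lam a b =
      √(a * b) * if b ≤ a ∨ lam < 2 * √a then 1 else √(a / b) := by
  unfold optimalCrossCov
  split_ifs with hkeep
  · rw [mul_one, Real.sqrt_mul ha.le]
  · have hb : 0 < b := ha.trans (not_le.mp (not_or.mp hkeep).1)
    rw [← Real.sqrt_mul (mul_nonneg ha.le hb.le), show a * b * (a / b) = a * a by field_simp,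
      Real.sqrt_mul_self ha.le]

lemma optimalCrossCov_mul_inv (ha : 0 < a) :
    optimalCrossCov lam a b * a⁻¹ = if b ≤ a ∨ lam < 2 * √a then √(b / a) else 1 := by
  unfold optimalCrossCov
  split_ifs
  · rw [Real.sqrt_div' b ha.le]
    field_simp
    rw [Real.sq_sqrt ha.le, mul_comm]
  · exact mul_inv_cancel₀ ha.ne'

end DirectionCost

section DisplacementObjective

variable {n : Type*} [Fintype n] [DecidableEq n]

noncomputable def displacementObjective (lam : ℝ) (Sigma0 Sigma1 K : Matrix n n ℝ) : ℝ :=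
  Sigma0.trace + Sigma1.trace - 2 * K.trace
    + lam * nuclearNorm ((Kᵀ * Sigma0⁻¹ - 1) * CFC.sqrt Sigma0)

lemma displacementObjective_conj_of_mem_orthogonalGroup {U : Matrix n n ℝ}
    (hU : U ∈ orthogonalGroup n ℝ) (lam : ℝ) {Sigma0 : Matrix n n ℝ} (h₀ : Sigma0.PosSemidef)
    (Sigma1 K : Matrix n n ℝ) :
    displacementObjective lam (U * Sigma0 * Uᵀ) (U * Sigma1 * Uᵀ) (U * K * Uᵀ)
      = displacementObjective lam Sigma0 Sigma1 K := by
  have hdisp : ((U * K * Uᵀ)ᵀ * (U * Sigma0 * Uᵀ)⁻¹ - 1) * CFC.sqrt (U * Sigma0 * Uᵀ)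
      = U * ((Kᵀ * Sigma0⁻¹ - 1) * CFC.sqrt Sigma0) * Uᵀ := by
    simp only [transpose_mul_mul_transpose, conj_inv_of_mem_orthogonalGroup hU,
      cfcSqrt_conj_of_mem_orthogonalGroup hU h₀, conj_mul_conj_of_mem_orthogonalGroup hU,
      Matrix.sub_mul, Matrix.mul_sub, Matrix.one_mul]
  rw [displacementObjective, displacementObjective, hdisp,
    nuclearNorm_conj_of_mem_orthogonalGroup hU, trace_conj_of_mem_orthogonalGroup hU,
    trace_conj_of_mem_orthogonalGroup hU, trace_conj_of_mem_orthogonalGroup hU]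

lemma mul_inv_sub_one_mul_sqrt (x a : ℝ) : (x * a⁻¹ - 1) * √a = x / √a - √a := by
  rw [sub_mul, one_mul, mul_assoc, inv_mul_eq_div, Real.sqrt_div_self, div_eq_mul_inv]

lemma displacementObjective_diagonal {a : n → ℝ} (ha : ∀ i, 0 < a i) (lam : ℝ) (b : n → ℝ)
    (D : Matrix n n ℝ) :
    displacementObjective lam (diagonal a) (diagonal b) D = ∑ i, a i + ∑ i, b i - 2 * D.trace
      + lam * nuclearNorm ((Dᵀ * diagonal a⁻¹ - 1) * diagonal fun i => √(a i)) := by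
  rw [displacementObjective, trace_diagonal, trace_diagonal,
    inv_diagonal_of_ne_zero fun i => (ha i).ne', cfcSqrt_diagonal fun i => (ha i).le]

lemma displacement_diagonal_apply (a : n → ℝ) (D : Matrix n n ℝ) (i : n) :
    ((Dᵀ * diagonal a⁻¹ - 1) * diagonal fun i => √(a i)) i i = D i i / √(a i) - √(a i) := by
  rw [mul_diagonal, Matrix.sub_apply, mul_diagonal, transpose_apply, one_apply_eq, Pi.inv_apply,
    mul_inv_sub_one_mul_sqrt]

lemma sum_directionCost_le_displacementObjective_diagonal {a : n → ℝ} (ha : ∀ i, 0 < a i)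
    {lam : ℝ} (hlam : 0 ≤ lam) (b : n → ℝ) (D : Matrix n n ℝ) :
    ∑ i, a i + ∑ i, b i + ∑ i, directionCost lam (a i) (D i i)
      ≤ displacementObjective lam (diagonal a) (diagonal b) D := by
  have hdiag := sum_abs_diag_le_nuclearNorm ((Dᵀ * diagonal a⁻¹ - 1) * diagonal fun i => √(a i))
  simp only [displacement_diagonal_apply] at hdiag
  rw [displacementObjective_diagonal ha]
  simp only [directionCost, Finset.sum_add_distrib, ← Finset.mul_sum, trace, diag_apply]
  linarith [mul_le_mul_of_nonneg_left hdiag hlam]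

lemma displacementObjective_diagonal_diagonal {a : n → ℝ} (ha : ∀ i, 0 < a i) (lam : ℝ)
    (b κ : n → ℝ) :
    displacementObjective lam (diagonal a) (diagonal b) (diagonal κ)
      = ∑ i, a i + ∑ i, b i + ∑ i, directionCost lam (a i) (κ i) := by
  have hdisp : ((diagonal κ)ᵀ * diagonal a⁻¹ - 1) * diagonal (fun i => √(a i))
      = diagonal fun i => κ i / √(a i) - √(a i) := by
    rw [diagonal_transpose, diagonal_mul_diagonal, ← diagonal_one, diagonal_sub,
      diagonal_mul_diagonal]
    exact congrArg diagonal (funext fun i => mul_inv_sub_one_mul_sqrt _ _)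
  rw [displacementObjective_diagonal ha, hdisp, nuclearNorm_diagonal, trace_diagonal]
  simp only [directionCost, Finset.sum_add_distrib, ← Finset.mul_sum]
  ring

end DisplacementObjective

lemma displacementObjective_diagonal_le {d : ℕ} {a b κ : Fin d → ℝ} (ha : ∀ i, 0 < a i)
    {lam : ℝ} (hlam : 0 ≤ lam)
    (hκ : ∀ i k, k ^ 2 ≤ a i * b i → directionCost lam (a i) (κ i) ≤ directionCost lam (a i) k)
    {D : Matrix (Fin d) (Fin d) ℝ} (hD : D ∈ crossCovFeasible (diagonal a) (diagonal b)) :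
    displacementObjective lam (diagonal a) (diagonal b) (diagonal κ)
      ≤ displacementObjective lam (diagonal a) (diagonal b) D := by
  rw [displacementObjective_diagonal_diagonal ha]
  refine le_trans ?_ (sum_directionCost_le_displacementObjective_diagonal ha hlam b D)
  gcongr with i
  refine hκ i _ ?_
  simpa only [diagonal_apply_eq] using sq_apply_le_of_mem_crossCovFeasible hD i i

theorem gaussian_barycentric_displacement_commuting_general
    {d : ℕ}
    (U : Matrix (Fin d) (Fin d) ℝ) (hU : U ∈ Matrix.orthogonalGroup (Fin d) ℝ)
    (a b : Fin d → ℝ) (ha : ∀ i, 0 < a i) (hb : ∀ i, 0 < b i)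
    (Sigma0 Sigma1 : Matrix (Fin d) (Fin d) ℝ)
    (hSigma0 : Sigma0 = U * Matrix.diagonal a * Uᵀ)
    (hSigma1 : Sigma1 = U * Matrix.diagonal b * Uᵀ)
    (h₀ : Sigma0.PosDef)
    (lam : ℝ) (hlam0 : 0 ≤ lam)
    -- the objective F(K) = tr Σ₀ + tr Σ₁ − 2 tr K + λ ‖(Kᵀ Σ₀⁻¹ − I) Σ₀^{1/2}‖_{S1}
    (F : Matrix (Fin d) (Fin d) ℝ → ℝ)
    (hF : ∀ K, F K = Sigma0.trace + Sigma1.trace - 2 * K.trace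
        + lam * nuclearNorm ((Kᵀ * Sigma0⁻¹ - 1) * (Matrix.PosSemidef.sqrt h₀.posSemidef)))
    -- the optimal per-direction multipliers m_i^⋆ and the matrix K*
    (mstar : Fin d → ℝ)
    (hmstar : ∀ i, mstar i =
        if b i ≤ a i ∨ lam < 2 * Real.sqrt (a i) then 1 else Real.sqrt (a i / b i))
    (Kstar : Matrix (Fin d) (Fin d) ℝ)
    (hKstar : Kstar = U * Matrix.diagonal (fun i => Real.sqrt (a i * b i) * mstar i) * Uᵀ)
    -- the associated barycentric coefficients α_i^⋆
    (αstar : Fin d → ℝ)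
    (hαstar : ∀ i, αstar i =
        if b i ≤ a i ∨ lam < 2 * Real.sqrt (a i) then Real.sqrt (b i / a i) else 1) :
    Kstar ∈ crossCovFeasible Sigma0 Sigma1 ∧
    (∀ K ∈ crossCovFeasible Sigma0 Sigma1, F Kstar ≤ F K) ∧
    Kstarᵀ * Sigma0⁻¹ = U * Matrix.diagonal αstar * Uᵀ := by
  have hκ : (fun i => √(a i * b i) * mstar i) = fun i => optimalCrossCov lam (a i) (b i) :=
    funext fun i => by rw [hmstar, optimalCrossCov_eq_sqrt_mul_mul (ha i)]
  have hF_diag : ∀ D, F (U * D * Uᵀ) = displacementObjective lam (diagonal a) (diagonal b) D := by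
    intro D
    rw [hF, h₀.posSemidef.sqrt_eq_cfcSqrt, ← displacementObjective_conj_of_mem_orthogonalGroup hU
      lam (posSemidef_diagonal_iff.mpr fun i => (ha i).le), ← hSigma0, ← hSigma1]
    rfl
  subst hSigma0 hSigma1 hKstar
  rw [hκ]
  refine ⟨?_, fun K hK => ?_, ?_⟩
  · exact conj_mem_crossCovFeasible (diagonal_mem_crossCovFeasible_diagonal ha
      fun i => optimalCrossCov_sq_le (ha i).le (hb i).le) U
  · have hD := conj_mem_crossCovFeasible hK Uᵀ
    obtain ⟨D, rfl⟩ : ∃ D, K = U * D * Uᵀ :=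
      ⟨_, (conj_transpose_conj_of_mem_orthogonalGroup hU K).symm⟩
    simp only [transpose_transpose, transpose_conj_conj_of_mem_orthogonalGroup hU] at hD
    rw [hF_diag, hF_diag]
    exact displacementObjective_diagonal_le ha hlam0
      (fun i k hk => directionCost_optimalCrossCov_le (ha i) hlam0 hk) hD
  · rw [conj_inv_of_mem_orthogonalGroup hU, transpose_mul_mul_transpose, diagonal_transpose,
      conj_mul_conj_of_mem_orthogonalGroup hU,
      inv_diagonal_of_ne_zero fun i => (ha i).ne', diagonal_mul_diagonal]
    exact congrArg (fun v => U * diagonal v * Uᵀ)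
      (funext fun i => by rw [hαstar, Pi.inv_apply, optimalCrossCov_mul_inv (ha i)])

/-- Gaussian barycentric displacement regularization with commuting covariances: the
nuclear-norm penalized displacement objective is minimized at the stated spectral solution,
whose barycentric matrix prunes expanding directions past the threshold `2√(a_i)`. -/
theorem gaussian_barycentric_displacement_commuting
    {d : ℕ}
    (U : Matrix (Fin d) (Fin d) ℝ) (hU : U ∈ Matrix.orthogonalGroup (Fin d) ℝ)
    (a b : Fin d → ℝ) (ha : ∀ i, 0 < a i) (hb : ∀ i, 0 < b i)
    (Sigma0 Sigma1 : Matrix (Fin d) (Fin d) ℝ)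
    (hSigma0 : Sigma0 = U * Matrix.diagonal a * Uᵀ)
    (hSigma1 : Sigma1 = U * Matrix.diagonal b * Uᵀ)
    (h₀ : Sigma0.PosDef)
    (lam : ℝ) (hlam0 : 0 ≤ lam)
    (hlam : ∀ i, a i < b i → lam ≠ 2 * Real.sqrt (a i))
    -- the objective F(K) = tr Σ₀ + tr Σ₁ − 2 tr K + λ ‖(Kᵀ Σ₀⁻¹ − I) Σ₀^{1/2}‖_{S1}
    (F : Matrix (Fin d) (Fin d) ℝ → ℝ)
    (hF : ∀ K, F K = Sigma0.trace + Sigma1.trace - 2 * K.trace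
        + lam * nuclearNorm ((Kᵀ * Sigma0⁻¹ - 1) * (Matrix.PosSemidef.sqrt h₀.posSemidef)))
    -- the optimal per-direction multipliers m_i^⋆ and the matrix K*
    (mstar : Fin d → ℝ)
    (hmstar : ∀ i, mstar i =
        if b i ≤ a i ∨ lam < 2 * Real.sqrt (a i) then 1 else Real.sqrt (a i / b i))
    (Kstar : Matrix (Fin d) (Fin d) ℝ)
    (hKstar : Kstar = U * Matrix.diagonal (fun i => Real.sqrt (a i * b i) * mstar i) * Uᵀ)
    -- the associated barycentric coefficients α_i^⋆
    (αstar : Fin d → ℝ)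
    (hαstar : ∀ i, αstar i =
        if b i ≤ a i ∨ lam < 2 * Real.sqrt (a i) then Real.sqrt (b i / a i) else 1) :
    Kstar ∈ crossCovFeasible Sigma0 Sigma1 ∧
    (∀ K ∈ crossCovFeasible Sigma0 Sigma1, F Kstar ≤ F K) ∧
    Kstarᵀ * Sigma0⁻¹ = U * Matrix.diagonal αstar * Uᵀ :=
  gaussian_barycentric_displacement_commuting_general U hU a b ha hb Sigma0 Sigma1 hSigma0 hSigma1
    h₀ lam hlam0 F hF mstar hmstar Kstar hKstar αstar hαstar
end

section
/- Let p, q ≥ 1 be real numbers and let A ∈ ℝ^{k×l} be a nonzero matrix with compact singular value decomposition A = ∑_{r=1}^{ρ} σ_r u_r v_rᵀ, where σ_1,…,σ_ρ > 0 are the nonzero singular values and {u_r}, {v_r} are orthonormal families. Define G := q‖A‖_{S_p}^{q−p} ∑_{r=1}^{ρ} σ_r^{p−1} u_r v_rᵀ. Then G is a subgradient of the convex function B ↦ ‖B‖_{S_p}^{q} at A; that is, for every B ∈ ℝ^{k×l}, ‖B‖_{S_p}^{q} ≥ ‖A‖_{S_p}^{q} + ⟨G, B − A⟩. -/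
open Matrix BigOperators

/-- The Schatten-`p` norm of a real matrix: the `ℓ_p` norm of the vector of its singular
values, realized as the square roots of the eigenvalues of `Mᴴ * M`. -/
noncomputable def schattenNorm {k l : Type*} [Fintype k] [Fintype l] [DecidableEq l]
    (p : ℝ) (M : Matrix k l ℝ) : ℝ :=
  (∑ j, Real.sqrt ((Matrix.isHermitian_conjTranspose_mul_self M).eigenvalues j) ^ p) ^ (1 / p)

/-- The Frobenius inner product of two real matrices. -/
def frobInner {m n : Type*} [Fintype m] [Fintype n] (A B : Matrix m n ℝ) : ℝ :=
  ∑ i, ∑ j, A i j * B i j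

/-!
Put `C = ∑ σ_r^{p-1} u_r v_rᵀ`. For every compact SVD `B = ∑ τ_s x_s y_sᵀ`,
`⟨C, B⟩ = ∑_{r,s} σ_r^{p-1} τ_s ⟨u_r, x_s⟩⟨v_r, y_s⟩`. By AM-GM and Bessel's inequality the
products of inner products are dominated by a doubly substochastic matrix, so weighted Hölder gives
`⟨C, B⟩ ≤ (∑ σ_r^p)^{(p-1)/p} (∑ τ_s^p)^{1/p}`, while orthonormality gives `⟨C, A⟩ = ∑ σ_r^p`.
Comparing two compact SVDs of `A` in this way, one of them built from the eigendecomposition of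
`Aᴴ A`, shows `‖A‖_{S_p} = (∑ σ_r^p)^{1/p}`. Hence `⟨C, A⟩ = ‖A‖^p` and `⟨C, B⟩ ≤ ‖A‖^{p-1} ‖B‖`,
and the claim reduces to the tangent-line inequality `a^q + q a^{q-1} (b - a) ≤ b^q`.
-/

universe u

section Frobenius

variable {m n ι : Type*} [Fintype m] [Fintype n] [Fintype ι]

theorem frobInner_vecMulVec_vecMulVec (a c : m → ℝ) (b d : n → ℝ) :
    frobInner (vecMulVec a b) (vecMulVec c d) = (a ⬝ᵥ c) * (b ⬝ᵥ d) := by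
  simp only [frobInner, vecMulVec_apply, dotProduct, Finset.sum_mul_sum]
  exact Finset.sum_congr rfl fun i _ => Finset.sum_congr rfl fun j _ => by ring

theorem frobInner_sum_left (M : ι → Matrix m n ℝ) (N : Matrix m n ℝ) :
    frobInner (∑ r, M r) N = ∑ r, frobInner (M r) N := by
  simp only [frobInner, Matrix.sum_apply, Finset.sum_mul]
  exact (Finset.sum_congr rfl fun _ _ => Finset.sum_comm).trans Finset.sum_comm

theorem frobInner_sum_right (M : Matrix m n ℝ) (N : ι → Matrix m n ℝ) :
    frobInner M (∑ r, N r) = ∑ r, frobInner M (N r) := by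
  simp only [frobInner, Matrix.sum_apply, Finset.mul_sum]
  exact (Finset.sum_congr rfl fun _ _ => Finset.sum_comm).trans Finset.sum_comm

theorem frobInner_smul_left (c : ℝ) (M N : Matrix m n ℝ) :
    frobInner (c • M) N = c * frobInner M N := by
  simp only [frobInner, Matrix.smul_apply, smul_eq_mul, Finset.mul_sum, mul_assoc]

theorem frobInner_smul_right (c : ℝ) (M N : Matrix m n ℝ) :
    frobInner M (c • N) = c * frobInner M N := by
  simp only [frobInner, Matrix.smul_apply, smul_eq_mul, Finset.mul_sum, mul_left_comm]

theorem frobInner_sub_right (M N N' : Matrix m n ℝ) :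
    frobInner M (N - N') = frobInner M N - frobInner M N' := by
  simp only [frobInner, Matrix.sub_apply, mul_sub, Finset.sum_sub_distrib]

theorem real_inner_eq_dotProduct (x y : EuclideanSpace ℝ n) :
    inner ℝ x y = x.ofLp ⬝ᵥ y.ofLp := by
  rw [EuclideanSpace.inner_eq_star_dotProduct, star_trivial, dotProduct_comm]

theorem frobInner_sum_vecMulVec {κ : Type*} [Fintype κ] (c : ι → ℝ) (u : ι → EuclideanSpace ℝ m)
    (v : ι → EuclideanSpace ℝ n) (d : κ → ℝ) (x : κ → EuclideanSpace ℝ m)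
    (y : κ → EuclideanSpace ℝ n) :
    frobInner (∑ r, c r • vecMulVec (fun i => u r i) (fun j => v r j))
        (∑ s, d s • vecMulVec (fun i => x s i) (fun j => y s j)) =
      ∑ r, ∑ s, c r * d s * (inner ℝ (u r) (x s) * inner ℝ (v r) (y s)) := by
  simp only [frobInner_sum_left, frobInner_sum_right, frobInner_smul_left, frobInner_smul_right,
    frobInner_vecMulVec_vecMulVec, real_inner_eq_dotProduct, Finset.mul_sum]
  rw [Finset.sum_comm]
  exact Finset.sum_congr rfl fun r _ => Finset.sum_congr rfl fun s _ => by ring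

end Frobenius

theorem sum_rpow_sub_one_mul_mul_le {ι κ : Type*} [Fintype ι] [Fintype κ] {p : ℝ} (hp : 1 ≤ p)
    {a : ι → ℝ} {b : κ → ℝ} {m : ι → κ → ℝ} (ha : ∀ i, 0 < a i) (hb : ∀ j, 0 ≤ b j)
    (hm : ∀ i j, 0 ≤ m i j) (hrow : ∀ i, ∑ j, m i j ≤ 1) (hcol : ∀ j, ∑ i, m i j ≤ 1) :
    ∑ i, ∑ j, a i ^ (p - 1) * b j * m i j ≤
      ((∑ i, a i ^ p) ^ (1 / p)) ^ (p - 1) * (∑ j, b j ^ p) ^ (1 / p) := by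
  set w : ι × κ → ℝ := fun x => a x.1 ^ p * m x.1 x.2
  set f : ι × κ → ℝ := fun x => b x.2 / a x.1
  have hw : ∀ x, 0 ≤ w x := fun x => mul_nonneg (by have := ha x.1; positivity) (hm _ _)
  have hf : ∀ x, 0 ≤ f x := fun x => div_nonneg (hb x.2) (ha x.1).le
  have hwf : ∑ i, ∑ j, a i ^ (p - 1) * b j * m i j = ∑ x, w x * f x := by
    rw [Fintype.sum_prod_type]
    refine Finset.sum_congr rfl fun i _ => Finset.sum_congr rfl fun j _ => ?_
    rw [Real.rpow_sub_one (ha i).ne']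
    simp only [w, f]
    field_simp
  have hw_sum : ∑ x, w x ≤ ∑ i, a i ^ p := by
    simp only [w, Fintype.sum_prod_type, ← Finset.mul_sum]
    exact Finset.sum_le_sum fun i _ =>
      mul_le_of_le_one_right (by have := ha i; positivity) (hrow i)
  have hwf_sum : ∑ x, w x * f x ^ p ≤ ∑ j, b j ^ p := by
    calc ∑ x, w x * f x ^ p = ∑ j, b j ^ p * ∑ i, m i j := by
          rw [Fintype.sum_prod_type, Finset.sum_comm]
          refine Finset.sum_congr rfl fun j _ => ?_
          rw [Finset.mul_sum]
          refine Finset.sum_congr rfl fun i _ => ?_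
          simp only [w, f]
          have := (Real.rpow_pos_of_pos (ha i) p).ne'
          rw [Real.div_rpow (hb j) (ha i).le]
          field_simp
      _ ≤ ∑ j, b j ^ p := Finset.sum_le_sum fun j _ =>
          mul_le_of_le_one_right (by have := hb j; positivity) (hcol j)
  have hexp : ((∑ i, a i ^ p) ^ (1 / p)) ^ (p - 1) = (∑ i, a i ^ p) ^ (1 - p⁻¹) := by
    rw [← Real.rpow_mul (Finset.sum_nonneg fun i _ => by have := ha i; positivity)]
    congr 1
    field_simp
  rw [hwf, hexp, one_div]
  calc ∑ x, w x * f x ≤ (∑ x, w x) ^ (1 - p⁻¹) * (∑ x, w x * f x ^ p) ^ p⁻¹ :=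
        Real.inner_le_weight_mul_Lp_of_nonneg _ hp w f hw hf
    _ ≤ _ := by
        have hw0 : 0 ≤ ∑ x, w x := Finset.sum_nonneg fun x _ => hw x
        have hwf0 : 0 ≤ ∑ x, w x * f x ^ p :=
          Finset.sum_nonneg fun x _ => mul_nonneg (hw x) (Real.rpow_nonneg (hf x) p)
        have hexp_nonneg : 0 ≤ 1 - p⁻¹ := sub_nonneg.mpr (inv_le_one_of_one_le₀ hp)
        exact mul_le_mul (Real.rpow_le_rpow hw0 hw_sum hexp_nonneg)
          (Real.rpow_le_rpow hwf0 hwf_sum (by positivity)) (by positivity)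
          (Real.rpow_nonneg (hw0.trans hw_sum) _)

theorem le_of_rpow_le_rpow_sub_one_mul {x y p : ℝ} (hx : 0 ≤ x) (hy : 0 ≤ y)
    (h : x ^ p ≤ x ^ (p - 1) * y) : x ≤ y := by
  rcases hx.eq_or_lt with rfl | hx
  · exact hy
  rw [Real.rpow_sub_one hx.ne', div_mul_eq_mul_div, le_div_iff₀ hx] at h
  exact le_of_mul_le_mul_left (by linarith) (Real.rpow_pos_of_pos hx p)

theorem rpow_tangent_line_le {a x q : ℝ} (ha : 0 < a) (hx : 0 ≤ x) (hq : 1 ≤ q) :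
    a ^ q + q * a ^ (q - 1) * (x - a) ≤ x ^ q := by
  have haq := Real.rpow_pos_of_pos ha q
  have h := one_add_mul_self_le_rpow_one_add (s := x / a - 1)
    (by linarith [div_nonneg hx ha.le]) hq
  rw [add_sub_cancel, Real.div_rpow hx ha.le, le_div_iff₀ haq] at h
  calc a ^ q + q * a ^ (q - 1) * (x - a) = (1 + q * (x / a - 1)) * a ^ q := by
        rw [Real.rpow_sub_one ha.ne']
        field_simp
    _ ≤ x ^ q := h

section Orthonormal

variable {E F : Type*} [NormedAddCommGroup E] [InnerProductSpace ℝ E] [NormedAddCommGroup F]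
  [InnerProductSpace ℝ F] {ι κ : Type*} [Fintype ι] [Fintype κ]

theorem Orthonormal.sum_inner_sq_le_one {v : ι → E} (hv : Orthonormal ℝ v) {x : E}
    (hx : ‖x‖ = 1) : ∑ i, inner ℝ (v i) x ^ 2 ≤ 1 := by
  simpa [hx, Real.norm_eq_abs, sq_abs] using hv.sum_inner_products_le x (s := Finset.univ)

theorem sum_sum_inner_mul_inner_le {p : ℝ} (hp : 1 ≤ p) {a : ι → ℝ} {b : κ → ℝ}
    (ha : ∀ i, 0 < a i) (hb : ∀ j, 0 ≤ b j) {u : ι → E} {v : ι → F} {x : κ → E} {y : κ → F}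
    (hu : Orthonormal ℝ u) (hv : Orthonormal ℝ v) (hx : Orthonormal ℝ x)
    (hy : Orthonormal ℝ y) :
    ∑ i, ∑ j, a i ^ (p - 1) * b j * (inner ℝ (u i) (x j) * inner ℝ (v i) (y j)) ≤
      ((∑ i, a i ^ p) ^ (1 / p)) ^ (p - 1) * (∑ j, b j ^ p) ^ (1 / p) := by
  set m : ι → κ → ℝ := fun i j => (inner ℝ (u i) (x j) ^ 2 + inner ℝ (v i) (y j) ^ 2) / 2
  have hrow : ∀ i, ∑ j, m i j ≤ 1 := fun i => by
    have hux := hx.sum_inner_sq_le_one (hu.1 i)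
    have hvy := hy.sum_inner_sq_le_one (hv.1 i)
    simp only [real_inner_comm (u i), real_inner_comm (v i)] at hux hvy
    simp only [m, ← Finset.sum_div, Finset.sum_add_distrib]
    linarith
  have hcol : ∀ j, ∑ i, m i j ≤ 1 := fun j => by
    have hux := hu.sum_inner_sq_le_one (hx.1 j)
    have hvy := hv.sum_inner_sq_le_one (hy.1 j)
    simp only [m, ← Finset.sum_div, Finset.sum_add_distrib]
    linarith
  calc _ ≤ ∑ i, ∑ j, a i ^ (p - 1) * b j * m i j := by
        refine Finset.sum_le_sum fun i _ => Finset.sum_le_sum fun j _ => ?_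
        have hab : 0 ≤ a i ^ (p - 1) * b j := mul_nonneg (by have := ha i; positivity) (hb j)
        have := two_mul_le_add_sq (inner ℝ (u i) (x j)) (inner ℝ (v i) (y j))
        exact mul_le_mul_of_nonneg_left (by simp only [m]; linarith) hab
    _ ≤ _ := sum_rpow_sub_one_mul_mul_le hp ha hb (fun i j => by positivity) hrow hcol

end Orthonormal

structure IsCompactSVD {m n ι : Type*} [Fintype m] [Fintype n] [Fintype ι] (A : Matrix m n ℝ)
    (σ : ι → ℝ) (u : ι → EuclideanSpace ℝ m) (v : ι → EuclideanSpace ℝ n) : Prop where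
  pos : ∀ r, 0 < σ r
  orthonormal_left : Orthonormal ℝ u
  orthonormal_right : Orthonormal ℝ v
  eq_sum : A = ∑ r, σ r • vecMulVec (fun i => u r i) (fun j => v r j)

namespace Matrix

variable {m : Type*} {n : Type u} [Fintype n] [DecidableEq n] (B : Matrix m n ℝ)

theorem eq_sum_vecMulVec_mulVec (y : OrthonormalBasis n ℝ (EuclideanSpace ℝ n)) :
    B = ∑ j, vecMulVec (B *ᵥ y j) (y j) := by
  have hyy : ∀ i j, (y i).ofLp ⬝ᵥ (y j).ofLp = if i = j then 1 else 0 := fun i j => by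
    rw [← real_inner_eq_dotProduct]; exact orthonormal_iff_ite.mp y.orthonormal i j
  apply toLin'.injective
  refine (y.toBasis.map (WithLp.linearEquiv 2 ℝ (n → ℝ))).ext fun k => ?_
  simp [vecMulVec_mulVec, hyy]

variable [Fintype m]

theorem mulVec_eigenvectorBasis_dotProduct (i j : n) :
    B *ᵥ ((isHermitian_conjTranspose_mul_self B).eigenvectorBasis i).ofLp ⬝ᵥ
        B *ᵥ ((isHermitian_conjTranspose_mul_self B).eigenvectorBasis j).ofLp =
      if i = j then (isHermitian_conjTranspose_mul_self B).eigenvalues j else 0 := by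
  set hH := isHermitian_conjTranspose_mul_self B
  rw [dotProduct_mulVec, ← vecMul_transpose, vecMul_vecMul, ← dotProduct_mulVec,
    ← conjTranspose_eq_transpose_of_trivial, hH.mulVec_eigenvectorBasis, dotProduct_smul,
    ← real_inner_eq_dotProduct, orthonormal_iff_ite.mp hH.eigenvectorBasis.orthonormal i j]
  split_ifs <;> simp

theorem mulVec_eigenvectorBasis_eq_zero {j : n}
    (hj : (isHermitian_conjTranspose_mul_self B).eigenvalues j = 0) :
    B *ᵥ ((isHermitian_conjTranspose_mul_self B).eigenvectorBasis j).ofLp = 0 :=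
  dotProduct_self_eq_zero.mp <|
    (B.mulVec_eigenvectorBasis_dotProduct j j).trans <| (if_pos rfl).trans hj

theorem schattenNorm_eq_sum_subtype {p : ℝ} (hp : p ≠ 0) :
    schattenNorm p B = (∑ j : {j // (isHermitian_conjTranspose_mul_self B).eigenvalues j ≠ 0},
      √((isHermitian_conjTranspose_mul_self B).eigenvalues j) ^ p) ^ (1 / p) := by
  set μ := (isHermitian_conjTranspose_mul_self B).eigenvalues
  have hzero : ∑ j : {j // ¬μ j ≠ 0}, √(μ j) ^ p = 0 := Finset.sum_eq_zero fun j _ => by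
    rw [not_not.mp j.2, Real.sqrt_zero, Real.zero_rpow hp]
  rw [schattenNorm, ← Fintype.sum_subtype_add_sum_subtype (fun j => μ j ≠ 0), hzero, add_zero]

theorem exists_isCompactSVD {p : ℝ} (hp : p ≠ 0) :
    ∃ (ι : Type u) (_ : Fintype ι) (σ : ι → ℝ) (u : ι → EuclideanSpace ℝ m)
      (v : ι → EuclideanSpace ℝ n),
      IsCompactSVD B σ u v ∧ schattenNorm p B = (∑ r, σ r ^ p) ^ (1 / p) := by
  set hH := isHermitian_conjTranspose_mul_self B
  set y := hH.eigenvectorBasis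
  set μ := hH.eigenvalues
  set σ : {j // μ j ≠ 0} → ℝ := fun j => √(μ j)
  set u : {j // μ j ≠ 0} → EuclideanSpace ℝ m := fun j => (σ j)⁻¹ • WithLp.toLp 2 (B *ᵥ y j)
  have hσ : ∀ j, 0 < σ j := fun j =>
    Real.sqrt_pos.mpr ((eigenvalues_conjTranspose_mul_self_nonneg B j).lt_of_ne' j.2)
  have hσ_sq : ∀ j, σ j * σ j = μ j := fun j =>
    Real.mul_self_sqrt (eigenvalues_conjTranspose_mul_self_nonneg B j)
  have hdot : ∀ i j, B *ᵥ (y i).ofLp ⬝ᵥ B *ᵥ (y j).ofLp = if i = j then μ j else 0 :=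
    B.mulVec_eigenvectorBasis_dotProduct
  have hB_zero : ∑ j : {j // ¬μ j ≠ 0}, vecMulVec (B *ᵥ y j) (y j) = 0 :=
    Finset.sum_eq_zero fun j _ => by
      rw [B.mulVec_eigenvectorBasis_eq_zero (not_not.mp j.2), zero_vecMulVec]
  refine ⟨{j // μ j ≠ 0}, inferInstance, σ, u, fun j => y j, ⟨hσ, ?_, ?_, ?_⟩, ?_⟩
  · rw [orthonormal_iff_ite]
    intro i j
    simp only [u, real_inner_smul_left, real_inner_smul_right, real_inner_eq_dotProduct, hdot,
      Subtype.ext_iff]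
    split_ifs with h
    · rw [← hσ_sq, Subtype.ext h]
      field_simp [(hσ j).ne']
    · simp
  · exact y.orthonormal.comp _ Subtype.val_injective
  · calc B = ∑ j, vecMulVec (B *ᵥ y j) (y j) := B.eq_sum_vecMulVec_mulVec y
      _ = ∑ j : {j // μ j ≠ 0}, vecMulVec (B *ᵥ y j) (y j) := by
        rw [← Fintype.sum_subtype_add_sum_subtype (fun j => μ j ≠ 0), hB_zero, add_zero]
      _ = ∑ j, σ j • vecMulVec (fun i => u j i) (fun k => y j k) :=
        Finset.sum_congr rfl fun j _ => by
          rw [← smul_vecMulVec]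
          congr 1
          ext i
          simp [u, (hσ j).ne']
  · exact B.schattenNorm_eq_sum_subtype hp

end Matrix

theorem schattenNorm_nonneg {m n : Type*} [Fintype m] [Fintype n] [DecidableEq n] (p : ℝ)
    (M : Matrix m n ℝ) : 0 ≤ schattenNorm p M :=
  Real.rpow_nonneg (Finset.sum_nonneg fun _ _ => Real.rpow_nonneg (Real.sqrt_nonneg _) _) _

namespace IsCompactSVD

variable {m n ι κ : Type*} [Fintype m] [Fintype n] [Fintype ι] [Fintype κ] {A : Matrix m n ℝ}
  {σ : ι → ℝ} {u : ι → EuclideanSpace ℝ m} {v : ι → EuclideanSpace ℝ n}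

theorem sum_rpow_nonneg (hA : IsCompactSVD A σ u v) (p : ℝ) : 0 ≤ ∑ r, σ r ^ p :=
  Finset.sum_nonneg fun r _ => (Real.rpow_pos_of_pos (hA.pos r) p).le

theorem sum_rpow_pos (hA : IsCompactSVD A σ u v) (hA0 : A ≠ 0) (p : ℝ) : 0 < ∑ r, σ r ^ p := by
  have : Nonempty ι := by
    by_contra h
    rw [not_nonempty_iff] at h
    exact hA0 (by simp [hA.eq_sum])
  exact Finset.sum_pos (fun r _ => Real.rpow_pos_of_pos (hA.pos r) p) Finset.univ_nonempty

theorem frobInner_rpow_sub_one_eq (hA : IsCompactSVD A σ u v) (p : ℝ) :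
    frobInner (∑ r, σ r ^ (p - 1) • vecMulVec (fun i => u r i) (fun j => v r j)) A =
      ∑ r, σ r ^ p := by
  classical
  rw [hA.eq_sum, frobInner_sum_vecMulVec]
  simp only [orthonormal_iff_ite.mp hA.orthonormal_left,
    orthonormal_iff_ite.mp hA.orthonormal_right, mul_ite, mul_one, mul_zero, Finset.sum_ite_eq,
    Finset.mem_univ, if_true]
  exact Finset.sum_congr rfl fun r _ => by
    rw [Real.rpow_sub_one (hA.pos r).ne', div_mul_cancel₀ _ (hA.pos r).ne']

theorem frobInner_rpow_sub_one_le (hA : IsCompactSVD A σ u v) {B : Matrix m n ℝ} {τ : κ → ℝ}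
    {x : κ → EuclideanSpace ℝ m} {y : κ → EuclideanSpace ℝ n} (hB : IsCompactSVD B τ x y)
    {p : ℝ} (hp : 1 ≤ p) :
    frobInner (∑ r, σ r ^ (p - 1) • vecMulVec (fun i => u r i) (fun j => v r j)) B ≤
      ((∑ r, σ r ^ p) ^ (1 / p)) ^ (p - 1) * (∑ s, τ s ^ p) ^ (1 / p) := by
  rw [hB.eq_sum, frobInner_sum_vecMulVec]
  exact sum_sum_inner_mul_inner_le hp hA.pos (fun s => (hB.pos s).le) hA.orthonormal_left
    hA.orthonormal_right hB.orthonormal_left hB.orthonormal_right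

theorem lpNorm_le (hA : IsCompactSVD A σ u v) {τ : κ → ℝ} {x : κ → EuclideanSpace ℝ m}
    {y : κ → EuclideanSpace ℝ n} (hA' : IsCompactSVD A τ x y) {p : ℝ} (hp : 1 ≤ p) :
    (∑ r, σ r ^ p) ^ (1 / p) ≤ (∑ s, τ s ^ p) ^ (1 / p) := by
  refine le_of_rpow_le_rpow_sub_one_mul (p := p) (Real.rpow_nonneg (hA.sum_rpow_nonneg p) _)
    (Real.rpow_nonneg (hA'.sum_rpow_nonneg p) _) ?_
  rw [one_div, Real.rpow_inv_rpow (hA.sum_rpow_nonneg p) (by positivity), ← one_div]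
  have h := hA.frobInner_rpow_sub_one_le hA' hp
  rwa [hA.frobInner_rpow_sub_one_eq] at h

theorem schattenNorm_eq [DecidableEq n] (hA : IsCompactSVD A σ u v) {p : ℝ} (hp : 1 ≤ p) :
    schattenNorm p A = (∑ r, σ r ^ p) ^ (1 / p) := by
  obtain ⟨κ, _, τ, x, y, hA', hnorm⟩ := A.exists_isCompactSVD (p := p) (by positivity)
  rw [hnorm]
  exact le_antisymm (hA'.lpNorm_le hA hp) (hA.lpNorm_le hA' hp)

end IsCompactSVD

/-- Subgradient formula for `B ↦ ‖B‖_{S_p}^q` at a nonzero matrix `A` with compact SVD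
`A = ∑_r σ_r u_r v_rᵀ`: the matrix `G = q‖A‖_{S_p}^{q−p} ∑_r σ_r^{p−1} u_r v_rᵀ` satisfies
the subgradient inequality `‖B‖_{S_p}^q ≥ ‖A‖_{S_p}^q + ⟨G, B − A⟩` for all `B`. -/
theorem schatten_power_subgradient
    {k l ρ : ℕ} (p q : ℝ) (hp : 1 ≤ p) (hq : 1 ≤ q)
    (A : Matrix (Fin k) (Fin l) ℝ) (hA0 : A ≠ 0)
    (σ : Fin ρ → ℝ) (hσ : ∀ r, 0 < σ r)
    (u : Fin ρ → EuclideanSpace ℝ (Fin k)) (v : Fin ρ → EuclideanSpace ℝ (Fin l))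
    (hu : Orthonormal ℝ u) (hv : Orthonormal ℝ v)
    (hSVD : A = ∑ r, σ r • Matrix.vecMulVec (fun i => u r i) (fun j => v r j))
    (G : Matrix (Fin k) (Fin l) ℝ)
    (hG : G = (q * schattenNorm p A ^ (q - p)) •
        ∑ r, σ r ^ (p - 1) • Matrix.vecMulVec (fun i => u r i) (fun j => v r j)) :
    ∀ B : Matrix (Fin k) (Fin l) ℝ,
      schattenNorm p B ^ q ≥ schattenNorm p A ^ q + frobInner G (B - A) := by
  intro B
  have hA : IsCompactSVD A σ u v := ⟨hσ, hu, hv, hSVD⟩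
  obtain ⟨κ, _, τ, x, y, hB, hB_norm⟩ := B.exists_isCompactSVD (p := p) (by positivity)
  have hA_norm := hA.schattenNorm_eq hp
  set a := schattenNorm p A
  set b := schattenNorm p B
  have ha : 0 < a := hA_norm ▸ Real.rpow_pos_of_pos (hA.sum_rpow_pos hA0 p) _
  have hCA : frobInner (∑ r, σ r ^ (p - 1) • vecMulVec (fun i => u r i) (fun j => v r j)) A =
      a ^ p := by
    rw [hA.frobInner_rpow_sub_one_eq, hA_norm, one_div,
      Real.rpow_inv_rpow (hA.sum_rpow_nonneg p) (by positivity)]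
  have hCB : frobInner (∑ r, σ r ^ (p - 1) • vecMulVec (fun i => u r i) (fun j => v r j)) B ≤
      a ^ (p - 1) * b := hA_norm ▸ hB_norm ▸ hA.frobInner_rpow_sub_one_le hB hp
  rw [hG, frobInner_smul_left, frobInner_sub_right, hCA, ge_iff_le]
  calc a ^ q + q * a ^ (q - p) * (frobInner _ B - a ^ p)
      ≤ a ^ q + q * a ^ (q - p) * (a ^ (p - 1) * b - a ^ p) := by gcongr
    _ = a ^ q + q * a ^ (q - 1) * (b - a) := by
        have h₁ : a ^ (q - p) * a ^ (p - 1) = a ^ (q - 1) := by rw [← Real.rpow_add ha]; ring_nf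
        have h₂ : a ^ (q - p) * a ^ p = a ^ (q - 1) * a := by
          rw [← Real.rpow_add ha, ← Real.rpow_add_one ha.ne']; ring_nf
        linear_combination (q * b) * h₁ - q * h₂
    _ ≤ b ^ q := rpow_tangent_line_le ha (schattenNorm_nonneg p B) hq
end
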